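/- arXiv:2511.10759 — 3 statements merged into one kernel-verified Lean document; each statement's English description precedes it below -/
import Mathlib

section
/- Assume the conventions: X is an infinite, connected, locally finite, vertex-transitive simple graph satisfying (UBQ) with separation constant σ > 0. Let ρ be a bi-infinite quasi-geodesic in X and let r ≥ σ. Then V ∖ N_r(ρ(ℤ)) has exactly two wide connected components. -/
open SimpleGraph

/-- Closed `r`-neighbourhood of a set `A` in the graph metric of `X`. -/
def gnbhd {V : Type*} (X : SimpleGraph V) (A : Set V) (r : ℝ) : Set V :=
  {v : V | ∃ a ∈ A, (X.dist v a : ℝ) ≤ r}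

/-- The induced subgraph on `Z` is connected. -/
def ConnSet {V : Type*} (X : SimpleGraph V) (Z : Set V) : Prop :=
  (X.induce Z).Connected

/-- `U` is a connected component of the subset `S` of the vertex set: `U` is a
nonempty connected subset of `S` which is maximal among connected subsets of `S`. -/
def IsCompOf {V : Type*} (X : SimpleGraph V) (U S : Set V) : Prop :=
  U ⊆ S ∧ U.Nonempty ∧ ConnSet X U ∧
    ∀ U' : Set V, U ⊆ U' → U' ⊆ S → ConnSet X U' → U' = U

/-- A subset `Z` is narrow if it is quasi-isometric to a subset of `ℝ`
with respect to the ambient graph metric. -/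
def Narrow {V : Type*} (X : SimpleGraph V) (Z : Set V) : Prop :=
  ∃ (lam c : ℝ) (f : Z → ℝ), 1 ≤ lam ∧ 0 ≤ c ∧
    ∀ x y : Z, |f x - f y| ≤ lam * (X.dist x.1 y.1 : ℝ) + c ∧
      (X.dist x.1 y.1 : ℝ) ≤ lam * |f x - f y| + c

/-- A subset is wide if it is not narrow. -/
def Wide {V : Type*} (X : SimpleGraph V) (Z : Set V) : Prop := ¬ Narrow X Z

/-- `ρ : ℤ → V` is a bi-infinite `(lam, c)`-quasi-geodesic path. -/
def IsBiQG {V : Type*} (X : SimpleGraph V) (lam c : ℝ) (ρ : ℤ → V) : Prop :=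
  (∀ n : ℤ, X.Adj (ρ n) (ρ (n + 1))) ∧
    ∀ s t : ℤ, |(s : ℝ) - (t : ℝ)| / lam - c ≤ (X.dist (ρ s) (ρ t) : ℝ)

/-- A bi-infinite quasi-geodesic: a bi-infinite path which is a
`(lam, c)`-quasi-geodesic for some `lam ≥ 1`, `c ≥ 0`. -/
def IsBiQuasiGeodesic {V : Type*} (X : SimpleGraph V) (ρ : ℤ → V) : Prop :=
  ∃ lam c : ℝ, 1 ≤ lam ∧ 0 ≤ c ∧ IsBiQG X lam c ρ

/-- The subset `S` has exactly two wide connected components. -/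
def TwoWideComps {V : Type*} (X : SimpleGraph V) (S : Set V) : Prop :=
  ∃ U₁ U₂ : Set V, U₁ ≠ U₂ ∧
    IsCompOf X U₁ S ∧ IsCompOf X U₂ S ∧ Wide X U₁ ∧ Wide X U₂ ∧
    ∀ U : Set V, IsCompOf X U S → Wide X U → U = U₁ ∨ U = U₂

/-- The uniformly bisecting quasi-geodesics property with separation constant `σ`. -/
def UBQ {V : Type*} (X : SimpleGraph V) (σ : ℝ) : Prop :=
  ∀ ρ : ℤ → V, IsBiQuasiGeodesic X ρ →
    TwoWideComps X ((gnbhd X (Set.range ρ) σ)ᶜ)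

/-- One-way infinite path. -/
def IsRay {V : Type*} (X : SimpleGraph V) (w : ℕ → V) : Prop :=
  ∀ n : ℕ, X.Adj (w n) (w (n + 1))

/-- `d(w t, A) → ∞` as `t → ∞`. -/
def DivergesFrom {V : Type*} (X : SimpleGraph V) (w : ℕ → V) (A : Set V) : Prop :=
  ∀ M : ℝ, ∃ N : ℕ, ∀ t : ℕ, N ≤ t → ∀ a ∈ A, M < (X.dist (w t) a : ℝ)

/-- `(w₁, w₂)` is a pair of witnesses for the bi-infinite quasi-geodesic `ρ`:
they are one-way infinite simple paths lying in distinct wide components of the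
complement of `N_σ(ρ(ℤ))`, both diverging from `ρ`. -/
def WitnessPair {V : Type*} (X : SimpleGraph V) (σ : ℝ) (ρ : ℤ → V)
    (w₁ w₂ : ℕ → V) : Prop :=
  IsRay X w₁ ∧ Function.Injective w₁ ∧ IsRay X w₂ ∧ Function.Injective w₂ ∧
  (∃ U₁ U₂ : Set V, U₁ ≠ U₂ ∧
    IsCompOf X U₁ ((gnbhd X (Set.range ρ) σ)ᶜ) ∧ Wide X U₁ ∧
    IsCompOf X U₂ ((gnbhd X (Set.range ρ) σ)ᶜ) ∧ Wide X U₂ ∧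
    Set.range w₁ ⊆ U₁ ∧ Set.range w₂ ⊆ U₂) ∧
  DivergesFrom X w₁ (Set.range ρ) ∧ DivergesFrom X w₂ (Set.range ρ)

/-- Concatenation of the reversal of the ray `a` with the ray `b`, as a
bi-infinite path (`t ↦ a (-t)` for `t ≤ 0` and `t ↦ b t` for `t ≥ 0`). -/
def biconcat {V : Type*} (a b : ℕ → V) : ℤ → V :=
  fun t => if t < 0 then a (-t).toNat else b t.toNat

/-- One-way infinite `(lam, c)`-quasi-geodesic ray. -/
def IsQGRay {V : Type*} (X : SimpleGraph V) (lam c : ℝ) (γ : ℕ → V) : Prop :=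
  IsRay X γ ∧
    ∀ s t : ℕ, |(s : ℝ) - (t : ℝ)| / lam - c ≤ (X.dist (γ s) (γ t) : ℝ)

/-- An `(R, r, lam, c)`-cross-examiner, with the three rays `γ i`, the three
witnesses `w i` and the three finite paths `q i` (of length `qn i`) indexed by
`ZMod 3` (where the paper's index `3` corresponds to `0 : ZMod 3`). -/
def IsCrossExaminer {V : Type*} (X : SimpleGraph V) (σ R r lam c : ℝ) (v₀ : V)
    (γ w : ZMod 3 → ℕ → V) (q : ZMod 3 → ℕ → V) (qn : ZMod 3 → ℕ) : Prop :=
  1 ≤ lam ∧ 0 ≤ c ∧ 10 * σ < r ∧ r < R ∧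
  (∀ i : ZMod 3, IsQGRay X lam c (γ i) ∧ γ i 0 = v₀ ∧ IsRay X (w i) ∧
    (∀ j : ℕ, j < qn i → X.Adj (q i j) (q i (j + 1)))) ∧
  ∀ i : ZMod 3,
    -- (CE1)
    IsBiQG X lam c (biconcat (γ (i + 1)) (γ (i + 2))) ∧
    -- (CE2)
    (∃ U : Set V,
      IsCompOf X U (Set.range (biconcat (γ (i + 1)) (γ (i + 2))) \
        gnbhd X (q 0 '' Set.Iic (qn 0) ∪ q 1 '' Set.Iic (qn 1) ∪ q 2 '' Set.Iic (qn 2))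
          (10 * σ)) ∧ w i 0 ∈ U ∧ v₀ ∈ U) ∧
    -- (CE3)
    WitnessPair X σ (biconcat (γ (i + 1)) (γ (i + 2))) (w i) (γ i) ∧
    -- (CE4)
    (∀ t : ℕ, r < (t : ℝ) → ∀ s : ℤ,
      10 * σ < (X.dist (w i t) (biconcat (γ (i + 1)) (γ (i + 2)) s) : ℝ)) ∧
    -- (CE5)
    (q i 0 ∈ Set.range (γ (i + 1)) ∧ q i (qn i) ∈ Set.range (γ (i + 2)) ∧
      (q i '' Set.Iic (qn i)) ∩
        gnbhd X (Set.range (w (i + 1)) ∪ Set.range (w (i + 2)) ∪ Set.range (γ i))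
          (10 * σ) = ∅) ∧
    -- (CE6)
    q i '' Set.Iic (qn i) ⊆ gnbhd X {v₀} (R - 10 * σ) \ gnbhd X {v₀} (r + 10 * σ)

/-- `X` has quadratic growth. -/
def QuadGrowth {V : Type*} (X : SimpleGraph V) : Prop :=
  ∃ C : ℝ, 0 < C ∧ ∀ v : V, ∀ n : ℕ, 1 ≤ n →
    ({u : V | X.dist u v ≤ n}.ncard : ℝ) ≤ C * (n : ℝ) ^ 2

/-- The set of vertices at distance exactly `1` from `A`. -/
def vertexBoundary {V : Type*} (X : SimpleGraph V) (A : Set V) : Set V :=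
  {v : V | v ∉ A ∧ ∃ a ∈ A, X.Adj v a}

/-- The depth of `A`: `inf {r ≥ 0 : A ⊆ N_r(∂A)}`. -/
noncomputable def gdepth {V : Type*} (X : SimpleGraph V) (A : Set V) : ℝ :=
  sInf {r : ℝ | 0 ≤ r ∧ A ⊆ gnbhd X (vertexBoundary X A) r}

/-- A `(lam, c)`-quasi-circle of length `n ≥ 1`: a closed path all of whose
subpaths of length at most `n / 2` are `(lam, c)`-quasi-geodesics. -/
def IsQuasiCircle {V : Type*} (X : SimpleGraph V) (lam c : ℝ) (n : ℕ)
    (C : ZMod n → V) : Prop :=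
  1 ≤ n ∧ (∀ k : ZMod n, X.Adj (C k) (C (k + 1))) ∧
    ∀ (k : ZMod n) (m s t : ℕ), 2 * m ≤ n → s ≤ m → t ≤ m →
      |(s : ℝ) - (t : ℝ)| / lam - c ≤
        (X.dist (C (k + (s : ZMod n))) (C (k + (t : ZMod n))) : ℝ)

/-- A truncated `(lam, c)`-quasi-circle with major face `F` (of length `nF`) and
minor face `f` (of length `nf`): `F` is the initial part of a `(lam, c)`-quasi-circle
and `f` is a `(lam, c)`-quasi-geodesic with the same endpoints as the remaining part. -/
def IsTruncQuasiCircle {V : Type*} (X : SimpleGraph V) (lam c : ℝ)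
    (F : ℕ → V) (nF : ℕ) (f : ℕ → V) (nf : ℕ) : Prop :=
  (∀ i : ℕ, i < nF → X.Adj (F i) (F (i + 1))) ∧
  (∀ i : ℕ, i < nf → X.Adj (f i) (f (i + 1))) ∧
  f 0 = F nF ∧ f nf = F 0 ∧
  (∀ s t : ℕ, s ≤ nf → t ≤ nf →
    |(s : ℝ) - (t : ℝ)| / lam - c ≤ (X.dist (f s) (f t) : ℝ)) ∧
  ∃ (n : ℕ) (C : ZMod n → V), IsQuasiCircle X lam c n C ∧ nF ≤ n ∧
    ∀ i : ℕ, i ≤ nF → C (i : ZMod n) = F i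

/-- The graph `X`, with its graph metric, is quasi-isometric to the metric space `Y`. -/
def QIto {V : Type*} (X : SimpleGraph V) (Y : Type*) [PseudoMetricSpace Y] : Prop :=
  ∃ (lam c : ℝ) (f : V → Y), 1 ≤ lam ∧ 0 ≤ c ∧
    (∀ x x' : V, (X.dist x x' : ℝ) / lam - c ≤ dist (f x) (f x') ∧
      dist (f x) (f x') ≤ lam * (X.dist x x' : ℝ) + c) ∧
    ∀ y : Y, ∃ x : V, dist y (f x) ≤ c

/-- The Gromov product `(x · y)_w` in the graph metric. -/
noncomputable def gromovProd {V : Type*} (X : SimpleGraph V) (w x y : V) : ℝ :=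
  ((X.dist x w : ℝ) + (X.dist y w : ℝ) - (X.dist x y : ℝ)) / 2

/-- `X` is Gromov hyperbolic. -/
def GromovHyperbolic {V : Type*} (X : SimpleGraph V) : Prop :=
  ∃ δ : ℝ, 0 ≤ δ ∧ ∀ w x y z : V,
    min (gromovProd X w x z) (gromovProd X w y z) - δ ≤ gromovProd X w x y

section Aux

variable {V : Type*} {X : SimpleGraph V}

lemma walk_mid_aux (hconn : X.Connected) :
    ∀ {u v : V} (p : X.Walk u v) (i : ℕ), i ≤ p.length →
      X.dist u (p.getVert i) ≤ i ∧ X.dist (p.getVert i) v ≤ p.length - i := by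
  intro u v p
  induction p with
  | nil =>
    intro i hi
    simp only [SimpleGraph.Walk.length_nil, Nat.le_zero] at hi
    subst hi
    simp [SimpleGraph.Walk.getVert_zero, SimpleGraph.dist_self]
  | @cons a b c h q ih =>
    intro i hi
    cases i with
    | zero =>
      simp only [SimpleGraph.Walk.getVert_zero]
      exact ⟨by simp [SimpleGraph.dist_self],
        by simpa using SimpleGraph.dist_le (SimpleGraph.Walk.cons h q)⟩
    | succ m =>
      have hm : m ≤ q.length := by simpa [SimpleGraph.Walk.length_cons] using hi
      obtain ⟨h1, h2⟩ := ih m hm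
      constructor
      · have hab : X.dist a b ≤ 1 := by
          simpa using SimpleGraph.dist_le (SimpleGraph.Walk.cons h SimpleGraph.Walk.nil)
        calc X.dist a ((SimpleGraph.Walk.cons h q).getVert (m+1))
            = X.dist a (q.getVert m) := by rw [SimpleGraph.Walk.getVert_cons_succ]
          _ ≤ X.dist a b + X.dist b (q.getVert m) := hconn.dist_triangle
          _ ≤ 1 + m := add_le_add hab h1
          _ = m + 1 := by omega
      · calc X.dist ((SimpleGraph.Walk.cons h q).getVert (m+1)) c
            = X.dist (q.getVert m) c := by rw [SimpleGraph.Walk.getVert_cons_succ]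
          _ ≤ q.length - m := h2
          _ = (SimpleGraph.Walk.cons h q).length - (m+1) := by
              rw [SimpleGraph.Walk.length_cons]; omega

lemma ball_finite_aux (hconn : X.Connected) (hlf : ∀ v : V, (X.neighborSet v).Finite) :
    ∀ (k : ℕ) (v : V), {u : V | X.dist u v ≤ k}.Finite := by
  intro k
  induction k with
  | zero =>
    intro v
    apply Set.Finite.subset (Set.finite_singleton v)
    intro u hu
    simp only [Set.mem_setOf_eq, Nat.le_zero] at hu
    simpa using (hconn.dist_eq_zero_iff).mp hu
  | succ k ih =>
    intro v
    have : {u : V | X.dist u v ≤ k + 1} ⊆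
        {u : V | X.dist u v ≤ k} ∪ ⋃ w ∈ {u : V | X.dist u v ≤ k}, X.neighborSet w := by
      intro u hu
      simp only [Set.mem_setOf_eq] at hu
      by_cases h : X.dist u v ≤ k
      · exact Or.inl h
      · have hne : X.dist u v ≠ 0 := by omega
        obtain ⟨p, hp⟩ := SimpleGraph.exists_walk_of_dist_ne_zero hne
        have hlen : 1 ≤ p.length := by omega
        have hadj : X.Adj (p.getVert 0) (p.getVert 1) := p.adj_getVert_succ (by omega)
        rw [p.getVert_zero] at hadj
        have hdist : X.dist (p.getVert 1) v ≤ p.length - 1 := (walk_mid_aux hconn p 1 hlen).2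
        refine Or.inr ?_
        refine Set.mem_biUnion (show p.getVert 1 ∈ {u : V | X.dist u v ≤ k} from ?_) hadj.symm
        simp only [Set.mem_setOf_eq]
        omega
    refine Set.Finite.subset (Set.Finite.union (ih v) ?_) this
    exact Set.Finite.biUnion (ih v) (fun w _ => hlf w)

/-- Uniform covering closed walks. -/
lemma exists_cover_walks_aux (hconn : X.Connected) (hlf : ∀ v : V, (X.neighborSet v).Finite)
    (htrans : ∀ u v : V, ∃ φ : X ≃g X, φ u = v) (v₀ : V) (k : ℕ) :
    ∃ L : ℕ, ∀ v : V, ∃ W : X.Walk v v, W.length = L ∧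
      (∀ u ∈ W.support, X.dist u v ≤ k) ∧ (∀ u, X.dist u v ≤ k → u ∈ W.support) := by
  have key : ∀ l : List V, (∀ u ∈ l, X.dist u v₀ ≤ k) →
      ∃ W : X.Walk v₀ v₀, (∀ w ∈ W.support, X.dist w v₀ ≤ k) ∧ ∀ u ∈ l, u ∈ W.support := by
    classical
    intro l
    induction l with
    | nil =>
      intro _
      refine ⟨SimpleGraph.Walk.nil, ?_, by simp⟩
      intro w hw
      simp only [SimpleGraph.Walk.support_nil, List.mem_singleton] at hw
      subst hw; simp [SimpleGraph.dist_self]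
    | cons u l ih =>
      intro hl
      obtain ⟨W, hW1, hW2⟩ := ih (fun x hx => hl x (List.mem_cons_of_mem _ hx))
      have hu : X.dist u v₀ ≤ k := hl u List.mem_cons_self
      obtain ⟨p, hp⟩ := hconn.exists_walk_length_eq_dist v₀ u
      have hpsup : ∀ w ∈ p.support, X.dist w v₀ ≤ k := by
        intro w hw
        calc X.dist w v₀ = X.dist v₀ w := SimpleGraph.dist_comm
          _ ≤ (p.takeUntil w hw).length := SimpleGraph.dist_le _
          _ ≤ p.length := p.length_takeUntil_le hw
          _ = X.dist v₀ u := hp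
          _ ≤ k := by rw [SimpleGraph.dist_comm]; exact hu
      refine ⟨(p.append p.reverse).append W, ?_, ?_⟩
      · intro w hw
        rw [SimpleGraph.Walk.mem_support_append_iff] at hw
        rcases hw with hw | hw
        · rw [SimpleGraph.Walk.mem_support_append_iff] at hw
          rcases hw with hw | hw
          · exact hpsup w hw
          · rw [SimpleGraph.Walk.support_reverse, List.mem_reverse] at hw
            exact hpsup w hw
        · exact hW1 w hw
      · intro x hx
        rcases List.mem_cons.mp hx with hx | hx
        · subst hx
          rw [SimpleGraph.Walk.mem_support_append_iff]
          left
          rw [SimpleGraph.Walk.mem_support_append_iff]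
          exact Or.inl (SimpleGraph.Walk.end_mem_support p)
        · rw [SimpleGraph.Walk.mem_support_append_iff]
          exact Or.inr (hW2 x hx)
  have hfin := ball_finite_aux hconn hlf k v₀
  obtain ⟨W₀, hW₀1, hW₀2⟩ := key hfin.toFinset.toList (by
    intro u hu
    rw [Finset.mem_toList, Set.Finite.mem_toFinset] at hu
    exact hu)
  have hW₀cov : ∀ u, X.dist u v₀ ≤ k → u ∈ W₀.support := by
    intro u hu
    exact hW₀2 u (by rw [Finset.mem_toList, Set.Finite.mem_toFinset]; exact hu)
  refine ⟨W₀.length, ?_⟩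
  intro v
  obtain ⟨φ, hφ⟩ := htrans v₀ v
  have hdist : ∀ a b : V, X.dist (φ a) (φ b) = X.dist a b := by
    intro a b
    have key2 : ∀ (ψ : X ≃g X) (a b : V), X.dist (ψ a) (ψ b) ≤ X.dist a b := by
      intro ψ a b
      obtain ⟨p, hp⟩ := hconn.exists_walk_length_eq_dist a b
      calc X.dist (ψ a) (ψ b) ≤ (p.map ψ.toHom).length := SimpleGraph.dist_le _
        _ = X.dist a b := by rw [SimpleGraph.Walk.length_map, hp]
    refine le_antisymm (key2 φ a b) ?_
    have := key2 φ.symm (φ a) (φ b)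
    simpa using this
  refine ⟨(W₀.map φ.toHom).copy hφ hφ, ?_, ?_, ?_⟩
  · rw [SimpleGraph.Walk.length_copy, SimpleGraph.Walk.length_map]
  · intro u hu
    rw [SimpleGraph.Walk.support_copy, SimpleGraph.Walk.support_map, List.mem_map] at hu
    obtain ⟨w, hw, rfl⟩ := hu
    have := hW₀1 w hw
    calc X.dist (φ.toHom w) v = X.dist (φ w) (φ v₀) := by rw [hφ]; rfl
      _ = X.dist w v₀ := hdist w v₀
      _ ≤ k := this
  · intro u hu
    rw [SimpleGraph.Walk.support_copy, SimpleGraph.Walk.support_map, List.mem_map]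
    refine ⟨φ.symm u, hW₀cov _ ?_, by simp⟩
    have h2 := hdist (φ.symm u) v₀
    rw [φ.apply_symm_apply, hφ] at h2
    rw [← h2]; exact hu

end Aux


theorem statement_2 {V : Type*} (X : SimpleGraph V)
    (hinf : Infinite V) (hconn : X.Connected)
    (hlf : ∀ v : V, (X.neighborSet v).Finite)
    (htrans : ∀ u v : V, ∃ φ : X ≃g X, φ u = v)
    (σ : ℝ) (hσ : 0 < σ) (hubq : UBQ X σ)
    (ρ : ℤ → V) (hρ : IsBiQuasiGeodesic X ρ) (r : ℝ) (hr : σ ≤ r) :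
    TwoWideComps X ((gnbhd X (Set.range ρ) r)ᶜ) := by
  classical
  obtain ⟨lam, c, hlam, hc, hpath, hqg⟩ := hρ
  have hlam0 : (0:ℝ) < lam := lt_of_lt_of_le zero_lt_one hlam
  set kσ : ℕ := ⌊σ⌋₊ with hkσdef
  set kr : ℕ := ⌊r⌋₊ with hkrdef
  have hr0 : (0:ℝ) ≤ r := le_trans hσ.le hr
  have hkk : kσ ≤ kr := Nat.floor_mono hr
  set k : ℕ := kr - kσ with hkdef
  have hkr_eq : kσ + k = kr := by omega
  obtain ⟨L, hWall⟩ := exists_cover_walks_aux hconn hlf htrans (ρ 0) k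
  choose W hWlen hWsub hWcov using hWall
  set P : ℤ := (L : ℤ) + 1 with hPdef
  have hP : (0:ℤ) < P := by omega
  have hdm : ∀ n j : ℤ, 0 ≤ j → j < P → (P * n + j) / P = n ∧ (P * n + j) % P = j := by
    intro n j hj hjP
    constructor
    · rw [add_comm, Int.add_mul_ediv_left j n (ne_of_gt hP),
        Int.ediv_eq_zero_of_lt hj hjP, zero_add]
    · rw [add_comm, Int.add_mul_emod_self_left, Int.emod_eq_of_lt hj hjP]
  set ρ' : ℤ → V := fun t => (W (ρ (t / P))).getVert (t % P).toNat with hρ'def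
  have hjfacts : ∀ t : ℤ, 0 ≤ t % P ∧ t % P < P :=
    fun t => ⟨Int.emod_nonneg t (ne_of_gt hP), Int.emod_lt_of_pos t hP⟩
  have hval : ∀ (n : ℤ) (i : ℕ), i ≤ L → ρ' (P * n + (i:ℤ)) = (W (ρ n)).getVert i := by
    intro n i hi
    have hiP : (i:ℤ) < P := by omega
    obtain ⟨h1, h2⟩ := hdm n (i:ℤ) (by positivity) hiP
    simp only [hρ'def, h2, Int.toNat_natCast]
    exact congrArg (fun x => (W (ρ x)).getVert i) h1
  have hρ'near : ∀ t : ℤ, X.dist (ρ' t) (ρ (t / P)) ≤ k := by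
    intro t
    apply hWsub
    rw [SimpleGraph.Walk.mem_support_iff_exists_getVert]
    refine ⟨(t % P).toNat, rfl, ?_⟩
    rw [hWlen]
    have := hjfacts t
    omega
  -- ρ' is a path
  have hadj' : ∀ t : ℤ, X.Adj (ρ' t) (ρ' (t + 1)) := by
    intro t
    obtain ⟨hj0, hjP⟩ := hjfacts t
    have ht : P * (t / P) + t % P = t := Int.mul_ediv_add_emod t P
    set n := t / P with hn
    set j := t % P with hj
    by_cases hcase : j + 1 < P
    · have e1 : ρ' t = (W (ρ n)).getVert j.toNat := by
        have h0 : t = P * n + ((j.toNat : ℕ) : ℤ) := by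
          rw [Int.toNat_of_nonneg hj0]; exact ht.symm
        rw [h0, hval n j.toNat (by omega)]
      have e2 : ρ' (t + 1) = (W (ρ n)).getVert (j.toNat + 1) := by
        have h0 : t + 1 = P * n + ((j.toNat + 1 : ℕ) : ℤ) := by
          push_cast
          rw [Int.toNat_of_nonneg hj0]
          linarith [ht]
        rw [h0, hval n (j.toNat + 1) (by omega)]
      rw [e1, e2]
      exact (W (ρ n)).adj_getVert_succ (by rw [hWlen]; omega)
    · have hjeq : j + 1 = P := by omega
      have e1 : ρ' t = ρ n := by
        have h0 : t = P * n + ((L : ℕ) : ℤ) := by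
          have : j = (L : ℤ) := by omega
          rw [← this]; exact ht.symm
        rw [h0, hval n L le_rfl, ← hWlen (ρ n)]
        exact SimpleGraph.Walk.getVert_length _
      have e2 : ρ' (t + 1) = ρ (n + 1) := by
        have h0 : t + 1 = P * (n + 1) + ((0 : ℕ) : ℤ) := by
          push_cast
          rw [mul_add, mul_one]
          linarith [ht, hjeq]
        rw [h0, hval (n + 1) 0 (Nat.zero_le L)]
        exact SimpleGraph.Walk.getVert_zero _
      rw [e1, e2]
      exact hpath n
  -- ρ' is a quasi-geodesic
  have hPR : (1:ℝ) ≤ (P:ℝ) := by exact_mod_cast hP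
  have hPR0 : (0:ℝ) < (P:ℝ) := by exact_mod_cast hP
  have hqg' : ∀ s t : ℤ, |(s : ℝ) - (t : ℝ)| / ((P:ℝ) * lam) - (c + 2*(k:ℝ) + 1)
      ≤ (X.dist (ρ' s) (ρ' t) : ℝ) := by
    intro s t
    set ds := s / P with hds
    set dt := t / P with hdt
    -- natural triangle inequality
    have d1 : X.dist (ρ ds) (ρ dt) ≤ X.dist (ρ' s) (ρ' t) + 2 * k := by
      have t1 : X.dist (ρ ds) (ρ dt) ≤ X.dist (ρ ds) (ρ' s) + X.dist (ρ' s) (ρ dt) :=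
        hconn.dist_triangle
      have t2 : X.dist (ρ' s) (ρ dt) ≤ X.dist (ρ' s) (ρ' t) + X.dist (ρ' t) (ρ dt) :=
        hconn.dist_triangle
      have n1 := hρ'near s
      have n2 := hρ'near t
      have c1 : X.dist (ρ ds) (ρ' s) = X.dist (ρ' s) (ρ ds) := SimpleGraph.dist_comm
      rw [← hds] at n1
      rw [← hdt] at n2
      omega
    have d1R : (X.dist (ρ ds) (ρ dt) : ℝ) ≤ (X.dist (ρ' s) (ρ' t) : ℝ) + 2 * (k:ℝ) := by
      exact_mod_cast d1
    have d2 := hqg ds dt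
    -- |s - t| ≤ P * |ds - dt| + (P - 1)
    have hsplit : (s:ℝ) - (t:ℝ) =
        (P:ℝ) * ((ds:ℝ) - (dt:ℝ)) + (((s % P : ℤ):ℝ) - ((t % P : ℤ):ℝ)) := by
      have hs' : (P:ℝ) * (ds:ℝ) + ((s % P : ℤ):ℝ) = (s:ℝ) := by
        exact_mod_cast congrArg (Int.cast : ℤ → ℝ) (Int.mul_ediv_add_emod s P)
      have ht' : (P:ℝ) * (dt:ℝ) + ((t % P : ℤ):ℝ) = (t:ℝ) := by
        exact_mod_cast congrArg (Int.cast : ℤ → ℝ) (Int.mul_ediv_add_emod t P)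
      linear_combination ht' - hs'
    have hmod : |((s % P : ℤ):ℝ) - ((t % P : ℤ):ℝ)| ≤ (P:ℝ) - 1 := by
      obtain ⟨a1, a2⟩ := hjfacts s
      obtain ⟨b1, b2⟩ := hjfacts t
      rw [abs_le]
      constructor
      · have : -((P:ℝ) - 1) ≤ ((s % P : ℤ):ℝ) - ((t % P : ℤ):ℝ) := by
          have h1 : (0:ℝ) ≤ ((s % P : ℤ):ℝ) := by exact_mod_cast a1
          have h2 : ((t % P : ℤ):ℝ) ≤ (P:ℝ) - 1 := by
            have : (t % P : ℤ) ≤ P - 1 := by omega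
            exact_mod_cast this
          linarith
        exact this
      · have h1 : (0:ℝ) ≤ ((t % P : ℤ):ℝ) := by exact_mod_cast b1
        have h2 : ((s % P : ℤ):ℝ) ≤ (P:ℝ) - 1 := by
          have : (s % P : ℤ) ≤ P - 1 := by omega
          exact_mod_cast this
        linarith
    have d3 : |(s:ℝ) - (t:ℝ)| ≤ (P:ℝ) * |(ds:ℝ) - (dt:ℝ)| + ((P:ℝ) - 1) := by
      calc |(s:ℝ) - (t:ℝ)|
          ≤ |(P:ℝ) * ((ds:ℝ) - (dt:ℝ))| + |((s % P : ℤ):ℝ) - ((t % P : ℤ):ℝ)| := by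
            rw [hsplit]; exact abs_add_le _ _
        _ = (P:ℝ) * |(ds:ℝ) - (dt:ℝ)| + |((s % P : ℤ):ℝ) - ((t % P : ℤ):ℝ)| := by
            rw [abs_mul, abs_of_pos hPR0]
        _ ≤ (P:ℝ) * |(ds:ℝ) - (dt:ℝ)| + ((P:ℝ) - 1) := by linarith [hmod]
    -- combine
    set A := |(ds:ℝ) - (dt:ℝ)| with hA
    have hA0 : 0 ≤ A := abs_nonneg _
    have e5 : A ≤ lam * ((X.dist (ρ ds) (ρ dt) : ℝ) + c) := by
      have : A / lam ≤ (X.dist (ρ ds) (ρ dt) : ℝ) + c := by linarith [d2]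
      calc A = (A / lam) * lam := by field_simp
        _ ≤ ((X.dist (ρ ds) (ρ dt) : ℝ) + c) * lam :=
            mul_le_mul_of_nonneg_right this hlam0.le
        _ = lam * ((X.dist (ρ ds) (ρ dt) : ℝ) + c) := by ring
    set D := (X.dist (ρ' s) (ρ' t) : ℝ) with hD
    have hD0 : 0 ≤ D := by positivity
    rw [sub_le_iff_le_add, div_le_iff₀ (by positivity)]
    have hk0 : (0:ℝ) ≤ (k:ℝ) := by positivity
    nlinarith [mul_le_mul_of_nonneg_left e5 hPR0.le,
      mul_le_mul_of_nonneg_left d1R (mul_pos hPR0 hlam0).le]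
  have hbqg' : IsBiQuasiGeodesic X ρ' := by
    refine ⟨(P:ℝ) * lam, c + 2*(k:ℝ) + 1, ?_, by positivity, hadj', hqg'⟩
    calc (1:ℝ) ≤ lam := hlam
      _ = 1 * lam := (one_mul lam).symm
      _ ≤ (P:ℝ) * lam := mul_le_mul_of_nonneg_right hPR hlam0.le
  -- the key set identity
  have hkσR : (kσ:ℝ) ≤ σ := Nat.floor_le hσ.le
  have hkrR : (kr:ℝ) ≤ r := Nat.floor_le hr0
  have hseteq : gnbhd X (Set.range ρ') σ = gnbhd X (Set.range ρ) r := by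
    ext v
    constructor
    · rintro ⟨a, ⟨t, rfl⟩, hva⟩
      refine ⟨ρ (t / P), ⟨t / P, rfl⟩, ?_⟩
      have h1 : X.dist v (ρ' t) ≤ kσ := by
        apply Nat.le_floor
        exact hva
      have h2 : X.dist (ρ' t) (ρ (t / P)) ≤ k := hρ'near t
      have h3 : X.dist v (ρ (t / P)) ≤ X.dist v (ρ' t) + X.dist (ρ' t) (ρ (t / P)) :=
        hconn.dist_triangle
      have h4 : X.dist v (ρ (t / P)) ≤ kr := by omega
      calc (X.dist v (ρ (t / P)) : ℝ) ≤ (kr:ℝ) := by exact_mod_cast h4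
        _ ≤ r := hkrR
    · rintro ⟨a, ⟨n, rfl⟩, hva⟩
      have hd : X.dist v (ρ n) ≤ kr := Nat.le_floor hva
      by_cases hcase : X.dist v (ρ n) ≤ kσ
      · refine ⟨ρ n, ⟨P * n, ?_⟩, ?_⟩
        · have := hval n 0 (Nat.zero_le L)
          simpa [SimpleGraph.Walk.getVert_zero] using this
        · calc (X.dist v (ρ n) : ℝ) ≤ (kσ:ℝ) := by exact_mod_cast hcase
            _ ≤ σ := hkσR
      · obtain ⟨p, hp⟩ := hconn.exists_walk_length_eq_dist v (ρ n)
        have hkσle : kσ ≤ p.length := by omega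
        obtain ⟨m1, m2⟩ := walk_mid_aux hconn p kσ hkσle
        set b := p.getVert kσ with hb
        have hbk : X.dist b (ρ n) ≤ k := by omega
        have hbsup : b ∈ (W (ρ n)).support := hWcov (ρ n) b hbk
        rw [SimpleGraph.Walk.mem_support_iff_exists_getVert] at hbsup
        obtain ⟨i, hib, hiL⟩ := hbsup
        rw [hWlen] at hiL
        refine ⟨b, ⟨P * n + (i:ℤ), ?_⟩, ?_⟩
        · rw [hval n i hiL, hib]
        · calc (X.dist v b : ℝ) ≤ (kσ:ℝ) := by exact_mod_cast m1
            _ ≤ σ := hkσR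
  have := hubq ρ' hbqg'
  rwa [hseteq] at this
end

section
/- Assume the conventions: X is an infinite, connected, locally finite, vertex-transitive simple graph satisfying (UBQ) with separation constant σ > 0. Let ρ be a bi-infinite quasi-geodesic and let U be a connected component of V ∖ N_σ(ρ(ℤ)). Suppose there is a one-way infinite simple path p with p(ℕ) ⊆ U and d(p(t), ρ(ℤ)) → ∞ as t → ∞. Then U is wide. -/
open SimpleGraph

section AuxStatement3

variable {V : Type*} {X : SimpleGraph V}

lemma iso_dist (hconn : X.Connected) (φ : X ≃g X) (u v : V) :
    X.dist (φ u) (φ v) = X.dist u v := by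
  have h1 : ∀ (ψ : X ≃g X) (a b : V), X.dist (ψ a) (ψ b) ≤ X.dist a b := by
    intro ψ a b
    obtain ⟨W, hW⟩ := hconn.exists_walk_length_eq_dist a b
    calc X.dist (ψ a) (ψ b) ≤ (W.map ψ.toHom).length := SimpleGraph.dist_le _
    _ = X.dist a b := by rw [SimpleGraph.Walk.length_map, hW]
  refine le_antisymm (h1 φ u v) ?_
  have h2 := h1 φ.symm (φ u) (φ v)
  simpa using h2

lemma reach_to_center (hconn : X.Connected) (Z : Set V) (x : V) (hx : x ∈ Z) (n : ℕ)
    (hball : ∀ v, X.dist v x ≤ n → v ∈ Z) :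
    ∀ k, ∀ z, X.dist z x ≤ k → k ≤ n → ∀ hzZ : z ∈ Z,
      (X.induce Z).Reachable ⟨z, hzZ⟩ ⟨x, hx⟩ := by
  intro k
  induction k with
  | zero =>
    intro z hz _ hzZ
    have : z = x := hconn.dist_eq_zero_iff.mp (Nat.le_zero.mp hz)
    subst this
    exact SimpleGraph.Reachable.refl _
  | succ k ih =>
    intro z hz hkn hzZ
    by_cases h0 : X.dist z x = 0
    · have : z = x := hconn.dist_eq_zero_iff.mp h0
      subst this
      exact SimpleGraph.Reachable.refl _
    · obtain ⟨W, hW⟩ := hconn.exists_walk_length_eq_dist z x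
      cases W with
      | nil => exact absurd hW.symm (by simpa using h0)
      | cons hadj W' =>
        rename_i y
        have hy : X.dist y x ≤ k := by
          have h1 : X.dist y x ≤ W'.length := SimpleGraph.dist_le _
          have h2 : W'.length + 1 = X.dist z x := by simpa using hW
          omega
        have hyZ : y ∈ Z := hball y (hy.trans (Nat.le_of_succ_le hkn))
        have hadj' : (X.induce Z).Adj ⟨z, hzZ⟩ ⟨y, hyZ⟩ := by
          simpa using hadj
        exact hadj'.reachable.trans (ih y hy (Nat.le_of_succ_le hkn) hyZ)

end AuxStatement3

theorem statement_3 {V : Type*} (X : SimpleGraph V)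
    (hinf : Infinite V) (hconn : X.Connected)
    (hlf : ∀ v : V, (X.neighborSet v).Finite)
    (htrans : ∀ u v : V, ∃ φ : X ≃g X, φ u = v)
    (σ : ℝ) (hσ : 0 < σ) (hubq : UBQ X σ)
    (ρ : ℤ → V) (hρ : IsBiQuasiGeodesic X ρ)
    (U : Set V) (hU : IsCompOf X U ((gnbhd X (Set.range ρ) σ)ᶜ))
    (p : ℕ → V) (hp : IsRay X p) (hpinj : Function.Injective p)
    (hpU : Set.range p ⊆ U) (hdiv : DivergesFrom X p (Set.range ρ)) :
    Wide X U := by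
  
  intro hnar
  classical
  obtain ⟨lam0, c0, F, hlam0, hc0, hF⟩ := hnar
  obtain ⟨v₀⟩ : Nonempty V := inferInstance
  -- Step 1: for each n, a point of U whose n-ball is contained in U
  have hball : ∀ n : ℕ, ∃ x : V, x ∈ U ∧ ∀ v : V, X.dist v x ≤ n → v ∈ U := by
    intro n
    obtain ⟨N, hN⟩ := hdiv ((n : ℝ) + σ)
    set x := p N with hxdef
    have hxU : x ∈ U := hpU ⟨N, rfl⟩
    refine ⟨x, hxU, ?_⟩
    have hBc : ∀ v : V, X.dist v x ≤ n → v ∈ (gnbhd X (Set.range ρ) σ)ᶜ := by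
      intro v hv hmemv
      obtain ⟨a, ha, hva⟩ := hmemv
      have htri : (X.dist x a : ℝ) ≤ (X.dist x v : ℝ) + (X.dist v a : ℝ) := by
        exact_mod_cast hconn.dist_triangle (u := x) (v := v) (w := a)
      have hxv : (X.dist x v : ℝ) ≤ (n : ℝ) := by
        rw [SimpleGraph.dist_comm]; exact_mod_cast hv
      have hfar := hN N le_rfl a ha
      linarith
    set Z := U ∪ {v : V | X.dist v x ≤ n} with hZdef
    have hxZ : x ∈ Z := Or.inl hxU
    have hZS : Z ⊆ (gnbhd X (Set.range ρ) σ)ᶜ := by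
      rintro v (hv | hv)
      · exact hU.1 hv
      · exact hBc v hv
    have hZconn : ConnSet X Z := by
      have hreach : ∀ z : Z, (X.induce Z).Reachable z ⟨x, hxZ⟩ := by
        rintro ⟨z, hz⟩
        rcases hz with hz | hz
        · have hUc := hU.2.2.1
          have hr : (X.induce U).Reachable ⟨z, hz⟩ ⟨x, hxU⟩ := hUc.preconnected _ _
          have hmap := hr.map
            (SimpleGraph.induceHomOfLE (G := X) (Set.subset_union_left : U ≤ Z)).toHom
          exact hmap
        · exact reach_to_center hconn Z x hxZ n (fun v hv => Or.inr hv) n z hz le_rfl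
            (Or.inr hz)
      have hneZ : Nonempty Z := ⟨⟨x, hxZ⟩⟩
      show (X.induce Z).Connected
      exact SimpleGraph.Connected.mk (fun a b => (hreach a).trans (hreach b).symm)
    have hZU : Z = U := hU.2.2.2 Z Set.subset_union_left hZS hZconn
    intro v hv
    have hvZ : v ∈ Z := Or.inr hv
    rwa [hZU] at hvZ
  choose x hxU hxball using hball
  have hphi : ∀ n : ℕ, ∃ φ : X ≃g X, φ v₀ = x n := fun n => htrans v₀ (x n)
  choose φ hφ using hphi
  have hmem : ∀ n v, X.dist v v₀ ≤ n → φ n v ∈ U := by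
    intro n v hv
    apply hxball n
    rw [← hφ n, iso_dist hconn (φ n) v v₀]
    exact hv
  set g : ℕ → V → ℝ := fun n v =>
    if h : φ n v ∈ U then F ⟨φ n v, h⟩ - F ⟨x n, hxU n⟩ else 0 with hgdef
  have hkey : ∀ (a b : V) (n : ℕ), X.dist a v₀ ≤ n → X.dist b v₀ ≤ n →
      |g n a - g n b| ≤ lam0 * (X.dist a b : ℝ) + c0 ∧
      (X.dist a b : ℝ) ≤ lam0 * |g n a - g n b| + c0 := by
    intro a b n ha hb
    have ha' := hmem n a ha
    have hb' := hmem n b hb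
    have hdisteq : (X.dist (φ n a) (φ n b) : ℝ) = (X.dist a b : ℝ) :=
      Nat.cast_inj.mpr (iso_dist hconn (φ n) a b)
    have hdiff : g n a - g n b = F ⟨φ n a, ha'⟩ - F ⟨φ n b, hb'⟩ := by
      simp only [hgdef, dif_pos ha', dif_pos hb']; ring
    have hFab := hF ⟨φ n a, ha'⟩ ⟨φ n b, hb'⟩
    rw [hdiff]
    constructor
    · have := hFab.1; rwa [hdisteq] at this
    · have := hFab.2; rwa [hdisteq] at this
  -- the ultrafilter limit
  set u : Ultrafilter ℕ := Ultrafilter.of Filter.cofinite with hudef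
  have hu : (u : Filter ℕ) ≤ Filter.atTop := by
    rw [← Nat.cofinite_eq_atTop]; exact Ultrafilter.of_le _
  have hgv0 : ∀ n, g n v₀ = 0 := by
    intro n
    have h0 : φ n v₀ ∈ U := by rw [hφ n]; exact hxU n
    have hx : (⟨φ n v₀, h0⟩ : U) = ⟨x n, hxU n⟩ := Subtype.ext (hφ n)
    simp only [hgdef, dif_pos h0, hx, sub_self]
  have hlim : ∀ v : V, ∃ L : ℝ, Filter.Tendsto (fun n => g n v) (u : Filter ℕ) (nhds L) := by
    intro v
    set M : ℝ := lam0 * (X.dist v v₀ : ℝ) + c0 with hMdef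
    have hev : ∀ᶠ n in (u : Filter ℕ), g n v ∈ Set.Icc (-M) M := by
      apply hu
      filter_upwards [Filter.eventually_ge_atTop (X.dist v v₀)] with n hn
      have hk := (hkey v v₀ n hn (by rw [SimpleGraph.dist_self]; exact Nat.zero_le n)).1
      rw [hgv0 n, sub_zero] at hk
      constructor
      · have := neg_abs_le (g n v); linarith [hk]
      · exact le_trans (le_abs_self _) hk
    have hle : (Ultrafilter.map (fun n => g n v) u : Filter ℝ) ≤
        Filter.principal (Set.Icc (-M) M) := by
      rw [Filter.le_principal_iff]
      exact Filter.mem_map.mpr hev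
    obtain ⟨L, _, hL⟩ := (isCompact_Icc (a := -M) (b := M)).ultrafilter_le_nhds
      (Ultrafilter.map (fun n => g n v) u) hle
    exact ⟨L, hL⟩
  choose L hL using hlim
  have hpair : ∀ a b : V, |L a - L b| ≤ lam0 * (X.dist a b : ℝ) + c0 ∧
      (X.dist a b : ℝ) ≤ lam0 * |L a - L b| + c0 := by
    intro a b
    have ht : Filter.Tendsto (fun n => |g n a - g n b|) (u : Filter ℕ)
        (nhds |L a - L b|) := ((hL a).sub (hL b)).abs
    have hev : ∀ᶠ n in (u : Filter ℕ),
        |g n a - g n b| ≤ lam0 * (X.dist a b : ℝ) + c0 ∧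
        (X.dist a b : ℝ) ≤ lam0 * |g n a - g n b| + c0 := by
      apply hu
      filter_upwards [Filter.eventually_ge_atTop (max (X.dist a v₀) (X.dist b v₀))]
        with n hn
      exact hkey a b n (le_trans (le_max_left _ _) hn) (le_trans (le_max_right _ _) hn)
    constructor
    · exact le_of_tendsto ht (hev.mono fun n h => h.1)
    · have ht2 : Filter.Tendsto (fun n => lam0 * |g n a - g n b| + c0) (u : Filter ℕ)
          (nhds (lam0 * |L a - L b| + c0)) := by
        exact ((ht.const_mul lam0).add tendsto_const_nhds)
      exact ge_of_tendsto ht2 (hev.mono fun n h => h.2)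
  obtain ⟨U₁, U₂, hne, hc1, hc2, hw1, hw2, _⟩ := hubq ρ hρ
  exact hw1 ⟨lam0, c0, fun z => L z.1, hlam0, hc0, fun a b => hpair a.1 b.1⟩
end

section
/- Let X be an infinite, connected, locally finite, vertex-transitive simple graph with vertex set V and graph metric d. Then X contains a bi-infinite geodesic: there exists ρ : ℤ → V with ρ(n) adjacent to ρ(n+1) for all n and d(ρ(s), ρ(t)) = |s − t| for all s, t ∈ ℤ. -/
open SimpleGraph

namespace Stmt18Aux
open CategoryTheory
variable {V : Type*} {X : SimpleGraph V}




lemma dist_getVert_succ_le {a b : V} (p : X.Walk a b) (i : ℕ) :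
    X.dist (p.getVert i) (p.getVert (i + 1)) ≤ 1 := by
  by_cases h : i < p.length
  · exact (dist_eq_one_iff_adj.mpr (p.adj_getVert_succ h)).le
  · rw [p.getVert_of_length_le (by omega : p.length ≤ i),
      p.getVert_of_length_le (by omega : p.length ≤ i + 1)]
    simp [SimpleGraph.dist_self]

lemma dist_getVert_le (hconn : X.Connected) {a b : V} (p : X.Walk a b) {i j : ℕ}
    (h : i ≤ j) : X.dist (p.getVert i) (p.getVert j) ≤ j - i := by
  obtain ⟨k, rfl⟩ := Nat.exists_eq_add_of_le h
  clear h
  induction k with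
  | zero => simp
  | succ k ih =>
      calc X.dist (p.getVert i) (p.getVert (i + (k + 1)))
          ≤ X.dist (p.getVert i) (p.getVert (i + k))
            + X.dist (p.getVert (i + k)) (p.getVert (i + k + 1)) := by
            have := hconn.dist_triangle (u := p.getVert i) (v := p.getVert (i + k))
              (w := p.getVert (i + k + 1))
            convert this using 3
            omega
        _ ≤ (i + k - i) + 1 := add_le_add ih (dist_getVert_succ_le p _)
        _ = i + (k + 1) - i := by omega

lemma dist_getVert_geodesic (hconn : X.Connected) {a b : V} (p : X.Walk a b)
    (hp : p.length = X.dist a b) {i j : ℕ} (hij : i ≤ j) (hj : j ≤ p.length) :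
    X.dist (p.getVert i) (p.getVert j) = j - i := by
  refine le_antisymm (dist_getVert_le hconn p hij) ?_
  have h1 : X.dist a (p.getVert i) ≤ i := by
    have := dist_getVert_le hconn p (Nat.zero_le i)
    simpa using this
  have h2 : X.dist (p.getVert j) b ≤ p.length - j := by
    have := dist_getVert_le hconn p hj
    rwa [p.getVert_length] at this
  have t1 := hconn.dist_triangle (u := a) (v := p.getVert i) (w := b)
  have t2 := hconn.dist_triangle (u := p.getVert i) (v := p.getVert j) (w := b)
  omega

lemma iso_dist (hconn : X.Connected) (φ : X ≃g X) (u v : V) :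
    X.dist (φ u) (φ v) = X.dist u v := by
  have key : ∀ (ψ : X ≃g X) (x y : V), X.dist (ψ x) (ψ y) ≤ X.dist x y := by
    intro ψ x y
    obtain ⟨p, hp⟩ := hconn.exists_walk_length_eq_dist x y
    have := X.dist_le (p.map ψ.toHom)
    rwa [Walk.length_map, hp] at this
  refine le_antisymm (key φ u v) ?_
  have := key φ.symm (φ u) (φ v)
  simpa using this

lemma ball_finite (hconn : X.Connected) (hlf : ∀ v : V, (X.neighborSet v).Finite)
    (v₀ : V) : ∀ n : ℕ, {u : V | X.dist u v₀ ≤ n}.Finite := by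
  intro n
  induction n with
  | zero =>
      refine Set.Finite.subset (Set.finite_singleton v₀) ?_
      intro u hu
      simp only [Set.mem_setOf_eq, Nat.le_zero] at hu
      simpa using (hconn.dist_eq_zero_iff (u := u) (v := v₀)).mp hu
  | succ n ih =>
      refine Set.Finite.subset (ih.union (ih.biUnion fun w _ => hlf w)) ?_
      intro u hu
      simp only [Set.mem_setOf_eq] at hu
      by_cases h : X.dist u v₀ ≤ n
      · exact Or.inl h
      · have hd : X.dist u v₀ = n + 1 := by omega
        obtain ⟨p, hp⟩ := hconn.exists_walk_length_eq_dist u v₀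
        refine Or.inr ?_
        refine Set.mem_biUnion (x := p.getVert 1) ?_ ?_
        · show X.dist (p.getVert 1) v₀ ≤ n
          have := dist_getVert_le hconn p (i := 1) (j := p.length) (by omega)
          rw [p.getVert_length] at this
          omega
        · have hadj : X.Adj (p.getVert 0) (p.getVert 1) :=
            p.adj_getVert_succ (by omega)
          rw [p.getVert_zero] at hadj
          exact hadj.symm

lemma sphere_nonempty (hinf : Infinite V) (hconn : X.Connected)
    (hlf : ∀ v : V, (X.neighborSet v).Finite) (v₀ : V) (n : ℕ) :
    ∃ u : V, X.dist v₀ u = n := by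
  obtain ⟨u, hu⟩ := (ball_finite hconn hlf v₀ n).infinite_compl.nonempty
  simp only [Set.mem_compl_iff, Set.mem_setOf_eq, not_le] at hu
  obtain ⟨p, hp⟩ := hconn.exists_walk_length_eq_dist v₀ u
  refine ⟨p.getVert n, ?_⟩
  have hn : n ≤ p.length := by rw [hp, X.dist_comm]; omega
  have := dist_getVert_geodesic hconn p hp (Nat.zero_le n) hn
  rw [p.getVert_zero] at this
  omega




/-- The property defining a centered geodesic segment of radius `n`. -/
def SegProp (X : SimpleGraph V) (v₀ : V) (n : ℕ) (g : ℤ → V) : Prop :=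
  g 0 = v₀ ∧ (∀ k : ℤ, (n : ℤ) < |k| → g k = v₀) ∧
    ∀ s t : ℤ, |s| ≤ (n : ℤ) → |t| ≤ (n : ℤ) → (X.dist (g s) (g t) : ℤ) = |s - t|

def trunc (v₀ : V) (n : ℕ) (g : ℤ → V) : ℤ → V :=
  fun k => if |k| ≤ (n : ℤ) then g k else v₀

lemma segProp_trunc {v₀ : V} {n m : ℕ} (h : m ≤ n) {g : ℤ → V}
    (hg : SegProp X v₀ n g) : SegProp X v₀ m (trunc v₀ m g) := by
  obtain ⟨h0, hout, hd⟩ := hg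
  refine ⟨?_, ?_, ?_⟩
  · simp [trunc, h0]
  · intro k hk
    have hk' : ¬ |k| ≤ (m : ℤ) := by omega
    simp [trunc, hk']
  · intro s t hs ht
    simp only [trunc, if_pos hs, if_pos ht]
    exact hd s t (by push_cast; omega) (by push_cast; omega)

lemma trunc_eq_self {v₀ : V} {n : ℕ} {g : ℤ → V} (hg : SegProp X v₀ n g) :
    trunc v₀ n g = g := by
  funext k
  by_cases h : |k| ≤ (n : ℤ)
  · simp [trunc, h]
  · simp only [trunc, if_neg h]
    exact (hg.2.1 k (by omega)).symm

lemma trunc_trunc {v₀ : V} {l m : ℕ} (h : l ≤ m) (g : ℤ → V) :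
    trunc v₀ l (trunc v₀ m g) = trunc v₀ l g := by
  funext k
  by_cases hk : |k| ≤ (l : ℤ)
  · simp [trunc, hk, if_pos (show |k| ≤ (m:ℤ) by push_cast; omega)]
  · simp [trunc, hk]

/-- The inverse system of centered geodesic segments. -/
def SegFunctor (X : SimpleGraph V) (v₀ : V) : ℕᵒᵖ ⥤ Type _ where
  obj n := {g : ℤ → V // SegProp X v₀ n.unop g}
  map {n m} f := TypeCat.ofHom fun g => ⟨trunc v₀ m.unop g.1, segProp_trunc (leOfHom f.unop) g.2⟩
  map_id n := by
    ext g
    exact congrFun (trunc_eq_self g.2) _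
  map_comp {n m l} f f' := by
    ext g
    exact congrFun (trunc_trunc (leOfHom f'.unop) g.1).symm _


lemma exists_segment (hinf : Infinite V) (hconn : X.Connected)
    (hlf : ∀ v : V, (X.neighborSet v).Finite)
    (htrans : ∀ u v : V, ∃ φ : X ≃g X, φ u = v) (v₀ : V) (n : ℕ) :
    ∃ g : ℤ → V, SegProp X v₀ n g := by
  obtain ⟨u, hu⟩ := sphere_nonempty hinf hconn hlf v₀ (2 * n)
  obtain ⟨p, hp⟩ := hconn.exists_walk_length_eq_dist v₀ u
  have hlen : p.length = 2 * n := by rw [hp, hu]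
  obtain ⟨φ, hφ⟩ := htrans (p.getVert n) v₀
  refine ⟨fun k => if |k| ≤ (n : ℤ) then φ (p.getVert ((n : ℤ) + k).toNat) else v₀,
    ?_, ?_, ?_⟩
  · have h0 : |(0 : ℤ)| ≤ (n : ℤ) := by simp
    simp only [if_pos h0]
    have : ((n : ℤ) + 0).toNat = n := by omega
    rw [this, hφ]
  · intro k hk
    have hk' : ¬ |k| ≤ (n : ℤ) := by omega
    simp [hk']
  · intro s t hs ht
    beta_reduce
    rw [if_pos hs, if_pos ht, iso_dist hconn]
    have key : ∀ a b : ℤ, |a| ≤ (n : ℤ) → |b| ≤ (n : ℤ) → a ≤ b →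
        (X.dist (p.getVert ((n : ℤ) + a).toNat) (p.getVert ((n : ℤ) + b).toNat) : ℤ)
          = b - a := by
      intro a b ha hb hab
      rw [abs_le] at ha hb
      have h1 : ((n : ℤ) + a).toNat ≤ ((n : ℤ) + b).toNat := by omega
      have h2 : ((n : ℤ) + b).toNat ≤ p.length := by omega
      have := dist_getVert_geodesic hconn p hp h1 h2
      omega
    rcases le_total s t with h | h
    · rw [key s t hs ht h, abs_sub_comm s t,
        abs_of_nonneg (by omega : (0 : ℤ) ≤ t - s)]
    · rw [X.dist_comm, key t s ht hs h,
        abs_of_nonneg (by omega : (0 : ℤ) ≤ s - t)]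

end Stmt18Aux

open Stmt18Aux CategoryTheory in
theorem statement_18 {V : Type*} (X : SimpleGraph V)
    (hinf : Infinite V) (hconn : X.Connected)
    (hlf : ∀ v : V, (X.neighborSet v).Finite)
    (htrans : ∀ u v : V, ∃ φ : X ≃g X, φ u = v) :
    ∃ ρ : ℤ → V, (∀ n : ℤ, X.Adj (ρ n) (ρ (n + 1))) ∧
      ∀ s t : ℤ, (X.dist (ρ s) (ρ t) : ℤ) = |s - t| := by
  classical
  obtain ⟨v₀⟩ : Nonempty V := inferInstance
  haveI hne : ∀ j : ℕᵒᵖ, Nonempty ((SegFunctor X v₀).obj j) := fun j => by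
    obtain ⟨g, hg⟩ := exists_segment hinf hconn hlf htrans v₀ j.unop
    exact ⟨⟨g, hg⟩⟩
  haveI hfin : ∀ j : ℕᵒᵖ, Finite ((SegFunctor X v₀).obj j) := fun j => by
    set m := j.unop with hm
    have hball := (ball_finite hconn hlf v₀ m).to_subtype
    have hIcc := (Set.finite_Icc (-(m : ℤ)) (m : ℤ)).to_subtype
    refine Finite.of_injective
      (fun g : (SegFunctor X v₀).obj j =>
        (fun k : (Set.Icc (-(m : ℤ)) (m : ℤ) : Set ℤ) =>
          (⟨g.1 k.1, by
            have hk : |k.1| ≤ (m : ℤ) := by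
              have := k.2; simp only [Set.mem_Icc] at this
              exact abs_le.mpr this
            have hd := g.2.2.2 k.1 0 hk (by simp)
            have h0 : g.1 0 = v₀ := g.2.1
            rw [h0, sub_zero, Int.abs_eq_natAbs] at hd
            rw [Int.abs_eq_natAbs] at hk
            show X.dist (g.1 k.1) v₀ ≤ m
            omega⟩ : ({w : V | X.dist w v₀ ≤ m} : Set V)))) ?_
    intro g h hgh
    apply Subtype.ext
    funext k
    by_cases hk : |k| ≤ (m : ℤ)
    · have hkm : k ∈ Set.Icc (-(m : ℤ)) (m : ℤ) := by
        simpa only [Set.mem_Icc] using abs_le.mp hk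
      have := congrFun hgh ⟨k, hkm⟩
      exact congrArg Subtype.val this
    · rw [g.2.2.1 k (not_le.mp hk), h.2.2.1 k (not_le.mp hk)]
  obtain ⟨u, hu⟩ := nonempty_sections_of_finite_inverse_system (SegFunctor X v₀)
  have compat : ∀ (m n : ℕ) (h : m ≤ n) (k : ℤ), |k| ≤ (m : ℤ) →
      (u (Opposite.op n)).1 k = (u (Opposite.op m)).1 k := by
    intro m n h k hk
    have := hu ((homOfLE h).op : Opposite.op n ⟶ Opposite.op m)
    have h2 := congrArg Subtype.val this
    have h3 : trunc v₀ m (u (Opposite.op n)).1 k = (u (Opposite.op m)).1 k := congrFun h2 k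
    simp only [SegFunctor, trunc] at h3
    rw [← h3, if_pos hk]
  set ρ : ℤ → V := fun k => (u (Opposite.op k.natAbs)).1 k with hρ
  have key : ∀ (n : ℕ) (k : ℤ), |k| ≤ (n : ℤ) →
      (u (Opposite.op n)).1 k = ρ k := by
    intro n k hk
    rw [Int.abs_eq_natAbs] at hk
    exact compat k.natAbs n (by omega) k (Int.abs_eq_natAbs k).le
  have hdist : ∀ s t : ℤ, (X.dist (ρ s) (ρ t) : ℤ) = |s - t| := by
    intro s t
    set n := max s.natAbs t.natAbs with hn
    have h1 := le_max_left s.natAbs t.natAbs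
    have h2 := le_max_right s.natAbs t.natAbs
    have hs : |s| ≤ (n : ℤ) := by rw [Int.abs_eq_natAbs]; omega
    have ht : |t| ≤ (n : ℤ) := by rw [Int.abs_eq_natAbs]; omega
    rw [← key n s hs, ← key n t ht]
    exact (u (Opposite.op n)).2.2.2 s t hs ht
  refine ⟨ρ, ?_, hdist⟩
  intro n
  have := hdist n (n + 1)
  have habs : |n - (n + 1)| = (1 : ℤ) := by rw [abs_sub_comm]; simp
  have h1 : X.dist (ρ n) (ρ (n + 1)) = 1 := by omega
  exact dist_eq_one_iff_adj.mp h1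
end
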